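/- arXiv:2310.20522 — 4 statements merged into one kernel-verified Lean document; each statement's English description precedes it below -/
import Mathlib

section
/- Let f : ℝ₊ → ℝ₊ be a non-decreasing function and let 𝒳 be a monotone class of graphs with |𝒳ₙ| ≤ 2^{C·n·f(n)} for all n, for some constant C ≥ 1. Then 𝒳 admits an adjacency labeling scheme of size (2C·f(n) + 1)·⌈log₂ n⌉; in particular, 𝒳 admits an O(f(n)·log n)-bit adjacency labeling scheme. -/
open Real

/-- A graph class: for each `n`, the set of its member graphs with vertex set `Fin n`. -/
abbrev GraphClass := (n : ℕ) → Set (SimpleGraph (Fin n))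

/-- `H` is (isomorphic to) a subgraph of `G`: there is an injective map of the vertices
of `H` into the vertices of `G` sending edges to edges. -/
def IsSubgraphOf {m n : ℕ} (H : SimpleGraph (Fin m)) (G : SimpleGraph (Fin n)) : Prop :=
  ∃ f : Fin m ↪ Fin n, ∀ u v : Fin m, H.Adj u v → G.Adj (f u) (f v)

/-- A graph class is monotone if it is closed under taking subgraphs. -/
def MonotoneGraphClass (𝒳 : GraphClass) : Prop :=
  ∀ {m n : ℕ} (H : SimpleGraph (Fin m)) (G : SimpleGraph (Fin n)),
    G ∈ 𝒳 n → IsSubgraphOf H G → H ∈ 𝒳 m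

/-- `𝒳` admits a `b n`-bit adjacency labeling scheme: there is a decoder `D` such that every
`n`-vertex graph in `𝒳` has a labeling of its vertices by binary strings of length `b n`
from which `D` decodes adjacency. -/
def HasScheme (𝒳 : GraphClass) (b : ℕ → ℕ) : Prop :=
  ∃ D : List Bool → List Bool → Bool,
    ∀ n : ℕ, ∀ G ∈ 𝒳 n, ∃ ℓ : Fin n → List Bool,
      (∀ v, (ℓ v).length = b n) ∧
      ∀ u v : Fin n, u ≠ v → (D (ℓ u) (ℓ v) = true ↔ G.Adj u v)

/-- `𝒳` admits an adjacency labeling scheme of size at most `b n` (a real-valued bound):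
there is a decoder `D` such that every `n`-vertex graph in `𝒳` has a labeling of its
vertices by binary strings of length at most `b n` from which `D` decodes adjacency. -/
def HasSchemeLe (𝒳 : GraphClass) (b : ℕ → ℝ) : Prop :=
  ∃ D : List Bool → List Bool → Bool,
    ∀ n : ℕ, ∀ G ∈ 𝒳 n, ∃ ℓ : Fin n → List Bool,
      (∀ v, ((ℓ v).length : ℝ) ≤ b n) ∧
      ∀ u v : Fin n, u ≠ v → (D (ℓ u) (ℓ v) = true ↔ G.Adj u v)

/-!
If `G ∈ 𝒳ₙ`, then all `2 ^ |E(G)|` spanning subgraphs of `G` lie in `𝒳ₙ`, so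
`|E(G)| ≤ C n f(n)` and `G` has a vertex of degree at most `2 C f(n)`. As induced subgraphs of `G`
lie in `𝒳` too and `f` is non-decreasing, `G` is `d`-degenerate for `d = ⌊2 C f(n)⌋`, so its edges
can be oriented with out-degree at most `d`. The label of `v` lists `v` and its out-neighbours,
padded with copies of `v` to `d + 1` entries of `⌈log₂ n⌉` bits each, and `u ~ v` iff one of `u`,
`v` is listed in the label of the other.
-/

open Finset

namespace SimpleGraph

section Orientation

variable {V : Type*}

-- Unlike an orientation in the strict sense, an edge may be listed in both directions.
def IsOrientation (G : SimpleGraph V) (out : V → Finset V) : Prop :=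
  ∀ u v, G.Adj u v ↔ v ∈ out u ∨ u ∈ out v

variable [Fintype V] [DecidableEq V] (G : SimpleGraph V) [DecidableRel G.Adj]

def IsDegenerate (d : ℕ) : Prop :=
  ∀ s : Finset V, s.Nonempty → ∃ v ∈ s, #(G.neighborFinset v ∩ s) ≤ d

variable {G} {d : ℕ}

lemma IsDegenerate.exists_orientation_on (hG : G.IsDegenerate d) (s : Finset V) :
    ∃ out : V → Finset V, (∀ v, out v ⊆ G.neighborFinset v) ∧ (∀ v, #(out v) ≤ d) ∧
      ∀ u ∈ s, ∀ v ∈ s, G.Adj u v → v ∈ out u ∨ u ∈ out v := by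
  induction s using Finset.strongInduction with
  | H s ih =>
    rcases s.eq_empty_or_nonempty with rfl | hs
    · exact ⟨fun _ => ∅, fun _ => empty_subset _, fun _ => by simp, by simp⟩
    obtain ⟨w, hws, hw⟩ := hG s hs
    obtain ⟨out, hsub, hcard, hcover⟩ := ih (s.erase w) (erase_ssubset hws)
    -- `w` takes all its edges inside `s`; the rest of `s` is oriented recursively.
    refine ⟨Function.update out w (G.neighborFinset w ∩ s), fun v => ?_, fun v => ?_, ?_⟩
    · rcases eq_or_ne v w with rfl | hv
      · simp [inter_subset_left]
      · simpa [hv] using hsub v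
    · rcases eq_or_ne v w with rfl | hv
      · simpa using hw
      · simpa [hv] using hcard v
    · intro u hu v hv huv
      rcases eq_or_ne u w with rfl | hu'
      · simp [huv, hv]
      rcases eq_or_ne v w with rfl | hv'
      · simp [huv.symm, hu]
      simpa [hu', hv'] using hcover u (mem_erase.mpr ⟨hu', hu⟩) v (mem_erase.mpr ⟨hv', hv⟩) huv

theorem IsDegenerate.exists_orientation (hG : G.IsDegenerate d) :
    ∃ out : V → Finset V, G.IsOrientation out ∧ ∀ v, #(out v) ≤ d := by
  obtain ⟨out, hsub, hcard, hcover⟩ := hG.exists_orientation_on univ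
  refine ⟨out, fun u v => ⟨hcover u (mem_univ u) v (mem_univ v), ?_⟩, hcard⟩
  rintro (h | h)
  · exact (mem_neighborFinset G u v).mp (hsub u h)
  · exact ((mem_neighborFinset G v u).mp (hsub v h)).symm

end Orientation

lemma exists_degree_mul_card_le {V : Type*} [Fintype V] [Nonempty V]
    (G : SimpleGraph V) [DecidableRel G.Adj] :
    ∃ v, G.degree v * Fintype.card V ≤ 2 * #G.edgeFinset := by
  obtain ⟨v, -, hv⟩ := exists_le_of_sum_le (f := fun v => G.degree v * Fintype.card V)
    (g := fun _ => 2 * #G.edgeFinset) univ_nonempty (by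
      rw [← sum_mul, sum_degrees_eq_twice_card_edges, sum_const, card_univ, smul_eq_mul, mul_comm])
  exact ⟨v, hv⟩

lemma card_neighborFinset_inter_eq_degree_comap {V : Type*} [Fintype V] [LinearOrder V]
    (G : SimpleGraph V) [DecidableRel G.Adj] (s : Finset V) (i : Fin #s) :
    #(G.neighborFinset (s.orderEmbOfFin rfl i) ∩ s) =
      (G.comap (s.orderEmbOfFin rfl)).degree i := by
  rw [← card_neighborFinset_eq_degree, ← card_map (s.orderEmbOfFin rfl).toEmbedding]
  congr 1
  ext v
  constructor
  · intro hv
    obtain ⟨j, rfl⟩ : v ∈ Set.range (s.orderEmbOfFin rfl) := by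
      rw [range_orderEmbOfFin]; exact (mem_inter.mp hv).2
    simpa using (mem_inter.mp hv).1
  · simp only [mem_map, mem_neighborFinset, comap_adj, mem_inter]
    rintro ⟨j, hj, rfl⟩
    exact ⟨hj, orderEmbOfFin_mem s rfl j⟩

end SimpleGraph

namespace MonotoneGraphClass

variable {𝒳 : GraphClass}

lemma two_pow_card_edgeFinset_le_ncard (hmono : MonotoneGraphClass 𝒳) {k : ℕ}
    {H : SimpleGraph (Fin k)} [DecidableRel H.Adj] (hH : H ∈ 𝒳 k) :
    2 ^ #H.edgeFinset ≤ (𝒳 k).ncard := by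
  have hsub : ∀ t ∈ H.edgeFinset.powerset, (t : Set (Sym2 (Fin k))) ⊆ H.edgeSet := fun t ht => by
    rw [← SimpleGraph.coe_edgeFinset]; exact_mod_cast mem_powerset.mp ht
  have hedgeSet : ∀ t ∈ H.edgeFinset.powerset, (SimpleGraph.fromEdgeSet ↑t).edgeSet = ↑t :=
    fun t ht => (SimpleGraph.edgeSet_eq_iff _ _).mpr ⟨rfl, Set.subset_compl_iff_disjoint_right.mp
      (Set.Subset.trans (hsub t ht) H.edgeSet_subset_compl_diagSet)⟩
  rw [← card_powerset, ← Set.ncard_coe_finset]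
  refine Set.ncard_le_ncard_of_injOn (fun t => SimpleGraph.fromEdgeSet ↑t) (fun t ht => ?_)
    (fun t ht t' ht' htt' => ?_) (Set.toFinite _)
  · refine hmono _ H hH ⟨Function.Embedding.refl _, fun u v huv => ?_⟩
    have huv' : s(u, v) ∈ (t : Set (Sym2 (Fin k))) := hedgeSet t ht ▸ huv
    exact hsub t ht huv'
  · simpa [hedgeSet t ht, hedgeSet t' ht'] using congrArg SimpleGraph.edgeSet htt'

lemma card_edgeFinset_le (hmono : MonotoneGraphClass 𝒳) {g : ℕ → ℝ}
    (hspeed : ∀ n : ℕ, ((𝒳 n).ncard : ℝ) ≤ (2 : ℝ) ^ g n) {k : ℕ} {H : SimpleGraph (Fin k)}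
    [DecidableRel H.Adj] (hH : H ∈ 𝒳 k) : (#H.edgeFinset : ℝ) ≤ g k := by
  rw [← Real.rpow_le_rpow_left_iff one_lt_two, Real.rpow_natCast]
  exact le_trans (by exact_mod_cast hmono.two_pow_card_edgeFinset_le_ncard hH) (hspeed k)

lemma eq_bot_of_le_zero (hmono : MonotoneGraphClass 𝒳) {g : ℕ → ℝ}
    (hspeed : ∀ n : ℕ, ((𝒳 n).ncard : ℝ) ≤ (2 : ℝ) ^ g n) {k : ℕ} (hg : g k ≤ 0)
    {H : SimpleGraph (Fin k)} (hH : H ∈ 𝒳 k) : H = ⊥ := by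
  classical
  rw [← SimpleGraph.edgeFinset_eq_empty, ← card_eq_zero, ← Nat.cast_eq_zero (R := ℝ)]
  exact le_antisymm ((hmono.card_edgeFinset_le hspeed hH).trans hg) (Nat.cast_nonneg _)

theorem isDegenerate (hmono : MonotoneGraphClass 𝒳) {C : ℝ} (hC : 0 ≤ C) {f : ℝ → ℝ}
    (hfmono : ∀ x y : ℝ, 0 ≤ x → x ≤ y → f x ≤ f y)
    (hspeed : ∀ n : ℕ, ((𝒳 n).ncard : ℝ) ≤ (2 : ℝ) ^ (C * n * f n)) {n : ℕ}
    {G : SimpleGraph (Fin n)} [DecidableRel G.Adj] (hG : G ∈ 𝒳 n) :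
    G.IsDegenerate ⌊2 * C * f n⌋₊ := by
  intro s hs
  set e := s.orderEmbOfFin rfl
  have hH : G.comap e ∈ 𝒳 #s := hmono _ G hG ⟨e.toEmbedding, fun _ _ h => h⟩
  have hpos : (0 : ℝ) < #s := by exact_mod_cast hs.card_pos
  have : Nonempty (Fin #s) := ⟨⟨0, hs.card_pos⟩⟩
  obtain ⟨i, hi⟩ := (G.comap e).exists_degree_mul_card_le
  refine ⟨e i, orderEmbOfFin_mem s rfl i, ?_⟩
  rw [G.card_neighborFinset_inter_eq_degree_comap]
  rw [Fintype.card_fin] at hi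
  have hdeg : ((G.comap e).degree i : ℝ) * #s ≤ 2 * C * f #s * #s := calc
    _ ≤ 2 * (#(G.comap e).edgeFinset : ℝ) := by exact_mod_cast hi
    _ ≤ 2 * (C * #s * f #s) := by gcongr; exact hmono.card_edgeFinset_le hspeed hH
    _ = 2 * C * f #s * #s := by ring
  refine Nat.le_floor ((le_of_mul_le_mul_right hdeg hpos).trans ?_)
  have hsn : (#s : ℝ) ≤ n := by exact_mod_cast (card_le_univ s).trans_eq (Fintype.card_fin n)
  gcongr
  exact hfmono _ _ hpos.le hsn

end MonotoneGraphClass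

def binaryDigits (L x : ℕ) : List Bool := List.ofFn fun i : Fin L => x.testBit i

@[simp] lemma length_binaryDigits (L x : ℕ) : (binaryDigits L x).length = L := List.length_ofFn

lemma binaryDigits_injOn (L : ℕ) : Set.InjOn (binaryDigits L) (Set.Iio (2 ^ L)) := by
  intro x hx y hy hxy
  refine Nat.eq_of_testBit_eq fun i => ?_
  rcases lt_or_ge i L with hi | hi
  · simpa [binaryDigits, hi] using congrArg (·[i]?) hxy
  · have hL : 2 ^ L ≤ 2 ^ i := Nat.pow_le_pow_right two_pos hi
    rw [Nat.testBit_eq_false_of_lt (lt_of_lt_of_le hx hL),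
      Nat.testBit_eq_false_of_lt (lt_of_lt_of_le hy hL)]

lemma binaryDigits_fin_injective {n L : ℕ} (hn : n ≤ 2 ^ L) :
    Function.Injective fun v : Fin n => binaryDigits L v := fun u v huv =>
  Fin.ext <| binaryDigits_injOn L (lt_of_lt_of_le u.2 hn) (lt_of_lt_of_le v.2 hn) huv

lemma List.splitLengths_map_length_flatten {α : Type*} (xs : List (List α)) :
    (xs.map List.length).splitLengths xs.flatten = xs := by
  induction xs with
  | nil => rfl
  | cons x xs ih => simp [ih]

def blocks {α : Type*} (L : ℕ) (a : List α) : List (List α) :=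
  (List.replicate (a.length / L) L).splitLengths a

lemma blocks_flatten {α : Type*} {L : ℕ} (hL : 0 < L) {xs : List (List α)}
    (h : ∀ x ∈ xs, x.length = L) : blocks L xs.flatten = xs := by
  have hlen : xs.map List.length = List.replicate xs.length L :=
    List.eq_replicate_iff.mpr ⟨List.length_map _, by simpa using h⟩
  rw [blocks, List.length_flatten, hlen, List.sum_replicate, smul_eq_mul,
    Nat.mul_div_cancel _ hL, ← hlen, List.splitLengths_map_length_flatten]

def decodeAdj (L : ℕ) (a b : List Bool) : Bool :=
  decide (b.take L ∈ blocks L (a.drop L) ∨ a.take L ∈ blocks L (b.drop L))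

section Labels

variable {n : ℕ} (d : ℕ) (out : Fin n → Finset (Fin n))

noncomputable def paddedOut (v : Fin n) : List (Fin n) :=
  (out v).toList ++ List.replicate (d - #(out v)) v

noncomputable def label (L : ℕ) (v : Fin n) : List Bool :=
  binaryDigits L v ++ ((paddedOut d out v).map fun w : Fin n => binaryDigits L w).flatten

variable {d out}

lemma length_paddedOut {v : Fin n} (h : #(out v) ≤ d) : (paddedOut d out v).length = d := by
  simp only [paddedOut, List.length_append, length_toList, List.length_replicate]
  omega

lemma mem_paddedOut_of_ne {u v : Fin n} (huv : u ≠ v) : u ∈ paddedOut d out v ↔ u ∈ out v := by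
  simp [paddedOut, huv]

lemma length_label (L : ℕ) {v : Fin n} (h : #(out v) ≤ d) :
    (label d out L v).length = (d + 1) * L := by
  simp [label, List.length_flatten, Function.comp_def, length_paddedOut h, add_mul, add_comm]

lemma take_label (L : ℕ) (v : Fin n) : (label d out L v).take L = binaryDigits L v :=
  List.take_left' (length_binaryDigits L v)

lemma blocks_drop_label {L : ℕ} (hL : 0 < L) (v : Fin n) :
    blocks L ((label d out L v).drop L) =
      (paddedOut d out v).map fun w : Fin n => binaryDigits L w := by
  rw [label, List.drop_left' (length_binaryDigits L v), blocks_flatten hL]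
  simp

lemma decodeAdj_label {L : ℕ} (hn : n ≤ 2 ^ L) {G : SimpleGraph (Fin n)}
    (hG : G.IsOrientation out) {u v : Fin n} (huv : u ≠ v) :
    decodeAdj L (label d out L u) (label d out L v) = true ↔ G.Adj u v := by
  have hL : 0 < L := Nat.pos_of_ne_zero fun hL => huv <| Fin.ext <| by
    have := u.2; have := v.2; simp only [hL, pow_zero] at hn; omega
  have hinj := binaryDigits_fin_injective hn
  simp only [decodeAdj, decide_eq_true_eq, take_label, blocks_drop_label hL,
    List.mem_map_of_injective hinj, mem_paddedOut_of_ne huv, mem_paddedOut_of_ne huv.symm, hG u v]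

end Labels

def labelLength (d : ℕ → ℕ) (n : ℕ) : ℕ := (d n + 1) * Nat.clog 2 n

lemma clog_eq_of_labelLength_eq {d : ℕ → ℕ} (hd : Monotone d) {m n : ℕ}
    (h : labelLength d m = labelLength d n) : Nat.clog 2 m = Nat.clog 2 n := by
  wlog hmn : m ≤ n generalizing m n
  · exact (this h.symm (le_of_not_ge hmn)).symm
  refine (Nat.clog_mono_right 2 hmn).antisymm (not_lt.mp fun hlt => h.not_lt ?_)
  calc (d m + 1) * Nat.clog 2 m ≤ (d n + 1) * Nat.clog 2 m :=
        Nat.mul_le_mul_right _ (Nat.succ_le_succ (hd hmn))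
    _ < (d n + 1) * Nat.clog 2 n := Nat.mul_lt_mul_of_pos_left hlt (Nat.succ_pos _)

theorem hasScheme_labelLength_of_forall_exists_orientation (𝒳 : GraphClass) {d : ℕ → ℕ}
    (hd : Monotone d)
    (h𝒳 : ∀ n, ∀ G ∈ 𝒳 n, ∃ out : Fin n → Finset (Fin n),
      G.IsOrientation out ∧ ∀ v, #(out v) ≤ d n) :
    HasScheme 𝒳 (labelLength d) := by
  -- The decoder reads `⌈log₂ n⌉` off the label length, which determines it as `d` is monotone.
  refine ⟨fun a b => decodeAdj (Nat.clog 2 (Function.invFun (labelLength d) a.length)) a b, ?_⟩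
  intro n G hG
  obtain ⟨out, hout, hcard⟩ := h𝒳 n G hG
  have hlength : ∀ v, (label (d n) out (Nat.clog 2 n) v).length = labelLength d n :=
    fun v => length_label _ (hcard v)
  refine ⟨label (d n) out (Nat.clog 2 n), hlength, fun u v huv => ?_⟩
  have hL : Nat.clog 2 (Function.invFun (labelLength d) (labelLength d n)) = Nat.clog 2 n :=
    clog_eq_of_labelLength_eq hd (Function.invFun_eq ⟨n, rfl⟩)
  simp only [hlength, hL]
  exact decodeAdj_label (Nat.le_pow_clog one_lt_two n) hout huv

lemma HasScheme.hasSchemeLe {𝒳 : GraphClass} {b : ℕ → ℕ} {c : ℕ → ℝ} (h : HasScheme 𝒳 b)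
    (hbc : ∀ n, (b n : ℝ) ≤ c n) : HasSchemeLe 𝒳 c := by
  obtain ⟨D, hD⟩ := h
  refine ⟨D, fun n G hG => ?_⟩
  obtain ⟨ℓ, hlength, hdecode⟩ := hD n G hG
  exact ⟨ℓ, fun v => (hlength v).symm ▸ hbc n, hdecode⟩

lemma hasScheme_zero {𝒳 : GraphClass} (h : ∀ n, ∀ G ∈ 𝒳 n, G = ⊥) : HasScheme 𝒳 0 :=
  ⟨fun _ _ => false, fun n G hG => ⟨fun _ => [], fun _ => rfl, fun u v _ => by simp [h n G hG]⟩⟩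

lemma clog_two_le_two_mul_logb {n : ℕ} (hn : 2 ≤ n) : (Nat.clog 2 n : ℝ) ≤ 2 * logb 2 n := by
  have hlog : 1 ≤ Nat.log 2 n := Nat.log_pos one_lt_two hn
  have hclog : Nat.clog 2 n ≤ Nat.log 2 n + 1 :=
    (Nat.clog_le_iff_le_pow one_lt_two).mpr (Nat.lt_pow_succ_log_self one_lt_two n).le
  calc (Nat.clog 2 n : ℝ) ≤ 2 * (Nat.log 2 n : ℕ) := by exact_mod_cast (by omega : _ ≤ 2 * _)
    _ ≤ 2 * logb 2 n := by gcongr; exact_mod_cast Real.natLog_le_logb n 2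

lemma floor_add_one_mul_clog_le {a c x : ℝ} (ha : 0 ≤ a) (hc : 0 < c) (hcx : c ≤ x) {n : ℕ}
    (hn : 2 ≤ n) : ((⌊a * x⌋₊ + 1) * Nat.clog 2 n : ℝ) ≤ (2 * a + 2 / c) * (x * logb 2 n) := by
  have hx : 0 < x := hc.trans_le hcx
  have hfloor : (⌊a * x⌋₊ + 1 : ℝ) ≤ (a + 1 / c) * x := calc
    (⌊a * x⌋₊ + 1 : ℝ) ≤ a * x + x / c := by
      gcongr
      · exact Nat.floor_le (mul_nonneg ha hx.le)
      · exact (one_le_div hc).mpr hcx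
    _ = (a + 1 / c) * x := by ring
  calc ((⌊a * x⌋₊ + 1) * Nat.clog 2 n : ℝ) ≤ (a + 1 / c) * x * (2 * logb 2 n) := by
        gcongr
        exact clog_two_le_two_mul_logb hn
    _ = (2 * a + 2 / c) * (x * logb 2 n) := by ring

/-- Let `f : ℝ₊ → ℝ₊` be non-decreasing and let `𝒳` be a monotone class
with `|𝒳ₙ| ≤ 2 ^ (C * n * f n)` for all `n`, for some constant `C ≥ 1`. Then `𝒳` admits an
adjacency labeling scheme of size `(2 * C * f n + 1) * ⌈log₂ n⌉`; in particular, `𝒳` admits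
an `O(f n * log n)`-bit adjacency labeling scheme. -/
theorem monotone_speed_labeling_scheme (f : ℝ → ℝ)
    (hf0 : ∀ x : ℝ, 0 ≤ x → 0 ≤ f x)
    (hfmono : ∀ x y : ℝ, 0 ≤ x → x ≤ y → f x ≤ f y)
    (C : ℝ) (hC : 1 ≤ C) (𝒳 : GraphClass) (hmono : MonotoneGraphClass 𝒳)
    (hspeed : ∀ n : ℕ, ((𝒳 n).ncard : ℝ) ≤ (2 : ℝ) ^ (C * n * f n)) :
    HasSchemeLe 𝒳 (fun n => (2 * C * f n + 1) * (Nat.clog 2 n : ℝ)) ∧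
    ∃ (b : ℕ → ℕ) (K : ℝ) (n₀ : ℕ), 0 < K ∧ HasScheme 𝒳 b ∧
      ∀ n : ℕ, n₀ ≤ n → (b n : ℝ) ≤ K * (f n * Real.logb 2 n) := by
  classical
  have hC0 : 0 ≤ C := zero_le_one.trans hC
  set d : ℕ → ℕ := fun n => ⌊2 * C * f n⌋₊
  have hd : Monotone d := fun m n hmn =>
    Nat.floor_le_floor (by gcongr; exact hfmono _ _ m.cast_nonneg (by exact_mod_cast hmn))
  have hscheme : HasScheme 𝒳 (labelLength d) :=
    hasScheme_labelLength_of_forall_exists_orientation 𝒳 hd fun _ _ hG =>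
      (hmono.isDegenerate hC0 hfmono hspeed hG).exists_orientation
  have hcast (n : ℕ) : (labelLength d n : ℝ) = (⌊2 * C * f n⌋₊ + 1) * Nat.clog 2 n := by
    simp [labelLength, d]
  refine ⟨hscheme.hasSchemeLe fun n => ?_, ?_⟩
  · rw [hcast]
    gcongr
    exact Nat.floor_le (mul_nonneg (by positivity) (hf0 n n.cast_nonneg))
  by_cases hpos : ∃ N : ℕ, 0 < f N
  · obtain ⟨N, hN⟩ := hpos
    refine ⟨labelLength d, 2 * (2 * C) + 2 / f N, N + 2, by positivity, hscheme, fun n hn => ?_⟩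
    rw [hcast]
    exact floor_add_one_mul_clog_le (by positivity) hN
      (hfmono _ _ N.cast_nonneg (by exact_mod_cast (by omega : N ≤ n))) (by omega)
  · simp only [not_exists, not_lt] at hpos
    have hf (n : ℕ) : f n = 0 := (hpos n).antisymm (hf0 n n.cast_nonneg)
    exact ⟨0, 1, 0, one_pos,
      hasScheme_zero fun n _ => hmono.eq_bot_of_le_zero hspeed (by simp [hf n]),
      fun n _ => by simp [hf n]⟩
end

section
/- Let G be a connected graph on n vertices with minimum degree d ≥ 1000 that has a spanning tree of maximum degree at most d. Then the number of graphs with vertex set {1,…,n} that are isomorphic to a subgraph of G is at least n!·2^{n·d/3}. -/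
/-!
Double counting. Fix a spanning tree `T ≤ G` with maximum degree at most `d`. A bijection
`σ : V ≃ Fin n` together with a graph `T ≤ X ≤ G` gives the labeled graph `σ(X)`, and there
are `n! · 2^(e(G) - n + 1)` such pairs. Given `H`, the bijection `σ` determines `X`, and it
maps `T` into `H` with `deg_H (σ u) ≤ deg_G u`; so `σ` is determined by the image of a root
followed by, down the tree, the choice of a neighbour of the image of each parent. Hence `H`
arises at most `n · ∏_{v ≠ root} deg_G (parent v)` times. Every vertex is the parent of at
most `d` vertices, so by `x ≤ 12d · 2^(x / 12d)` this product is at most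
`(12d)^(n-1) · 2^(e(G)/6)`. Then `nd ≤ 2e(G)` and `48d ≤ 2^(d/12)` leave at least
`n! · 2^(nd/3)` labeled graphs.
-/

open Finset

theorem Finset.sum_comp_le_nsmul_sum {ι κ M : Type*} [DecidableEq κ] [AddCommMonoid M]
    [PartialOrder M] [IsOrderedAddMonoid M] {s : Finset ι} {t : Finset κ} {p : ι → κ}
    (hp : ∀ i ∈ s, p i ∈ t) {f : κ → M} (hf : ∀ k ∈ t, 0 ≤ f k) {d : ℕ}
    (hd : ∀ k ∈ t, #{i ∈ s | p i = k} ≤ d) :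
    ∑ i ∈ s, f (p i) ≤ d • ∑ k ∈ t, f k := by
  rw [← sum_fiberwise_of_maps_to hp, smul_sum]
  refine sum_le_sum fun k hk => ?_
  calc ∑ i ∈ s with p i = k, f (p i) = #{i ∈ s | p i = k} • f k := by
        rw [← sum_const]; exact sum_congr rfl fun i hi => by rw [(mem_filter.1 hi).2]
    _ ≤ d • f k := nsmul_le_nsmul_left (hf k hk) (hd k hk)

namespace Real

theorem le_two_rpow {t : ℝ} (ht : 0 ≤ t) : t ≤ 2 ^ t := by
  have hlog : 1 / 2 < log 2 := by linarith [log_two_gt_d9]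
  have hexp : 2 ^ t = exp (t * log 2 / 2) ^ 2 := by
    rw [← exp_nat_mul, rpow_def_of_pos two_pos]; ring_nf
  rw [hexp]
  -- `(1 + y) ^ 2 ≥ 4 * y` for `y = t * log 2 / 2`
  nlinarith [add_one_le_exp (t * log 2 / 2), exp_pos (t * log 2 / 2),
    sq_nonneg (t * log 2 / 2 - 1), mul_nonneg ht (le_of_lt (lt_trans one_half_pos hlog))]

theorem le_mul_two_rpow_div {x K : ℝ} (hx : 0 ≤ x) (hK : 0 < K) : x ≤ K * 2 ^ (x / K) :=
  calc x = K * (x / K) := by field_simp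
    _ ≤ K * 2 ^ (x / K) := mul_le_mul_of_nonneg_left (le_two_rpow (by positivity)) hK.le

theorem prod_le_pow_card_mul_two_rpow {ι : Type*} {s : Finset ι} {x : ι → ℝ}
    (hx : ∀ i ∈ s, 0 ≤ x i) {K : ℝ} (hK : 0 < K) :
    ∏ i ∈ s, x i ≤ K ^ #s * 2 ^ ((∑ i ∈ s, x i) / K) := by
  calc ∏ i ∈ s, x i ≤ ∏ i ∈ s, K * 2 ^ (x i / K) :=
        prod_le_prod hx fun i hi => le_mul_two_rpow_div (hx i hi) hK
    _ = K ^ #s * 2 ^ ((∑ i ∈ s, x i) / K) := by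
        rw [prod_mul_distrib, prod_const, sum_div, rpow_sum_of_pos two_pos]

theorem mul_le_two_rpow_div_twelve {x : ℝ} (hx : 1000 ≤ x) : 48 * x ≤ 2 ^ (x / 12) := by
  have hlog : 0.69 < log 2 := by linarith [log_two_gt_d9]
  set y := x / 12 * log 2 with hy
  have hy57 : 57 ≤ y := by nlinarith
  calc 48 * x ≤ 900 * y := by nlinarith
    _ ≤ y ^ 4 / 24 := by
        rw [le_div_iff₀ (by norm_num)]
        nlinarith [pow_le_pow_left₀ (by norm_num) hy57 3]
    -- `2 ^ (x / 12) = exp y ≥ y ^ 4 / 4!`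
    _ ≤ 2 ^ (x / 12) := by
        rw [rpow_def_of_pos two_pos, mul_comm, ← hy]
        simpa [Nat.factorial] using pow_div_factorial_le_exp y (by linarith) 4

end Real

theorem two_rpow_mul_le_two_pow {n d m : ℕ} {P : ℝ} (hd : 1000 ≤ d) (hnd : n * d ≤ 2 * m)
    (hP : P ≤ (12 * d) ^ (n - 1) * 2 ^ ((m : ℝ) / 6)) :
    2 ^ ((n * d : ℝ) / 3) * (n * P * 2 ^ (n - 1)) ≤ 2 ^ m := by
  have hd' : (1000 : ℝ) ≤ d := by exact_mod_cast hd
  have hnd' : (n * d : ℝ) ≤ 2 * m := by exact_mod_cast hnd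
  have hvertex : (n : ℝ) * (12 * d) ^ (n - 1) * 2 ^ (n - 1) ≤ (48 * d) ^ n := by
    have hn : (n : ℝ) ≤ 2 ^ n := by exact_mod_cast n.lt_two_pow_self.le
    calc (n : ℝ) * (12 * d) ^ (n - 1) * 2 ^ (n - 1) = n * (24 * d) ^ (n - 1) := by
          rw [mul_assoc, ← mul_pow]; ring_nf
      _ ≤ 2 ^ n * (24 * d) ^ n := by
          gcongr
          · linarith
          · exact Nat.sub_le n 1
      _ = (48 * d) ^ n := by rw [← mul_pow]; ring_nf
  have hpow : ((48 * d : ℝ)) ^ n ≤ 2 ^ ((n * d : ℝ) / 12) := by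
    calc ((48 * d : ℝ)) ^ n ≤ (2 ^ ((d : ℝ) / 12)) ^ n := by
          gcongr; exact Real.mul_le_two_rpow_div_twelve hd'
      _ = 2 ^ ((n * d : ℝ) / 12) := by
          rw [← Real.rpow_natCast, ← Real.rpow_mul two_pos.le]; ring_nf
  calc 2 ^ ((n * d : ℝ) / 3) * (n * P * 2 ^ (n - 1))
      ≤ 2 ^ ((n * d : ℝ) / 3) *
          (n * ((12 * d) ^ (n - 1) * 2 ^ ((m : ℝ) / 6)) * 2 ^ (n - 1)) := by
        gcongr
    _ = 2 ^ ((n * d : ℝ) / 3) * (n * (12 * d) ^ (n - 1) * 2 ^ (n - 1)) * 2 ^ ((m : ℝ) / 6) := by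
        ring
    _ ≤ 2 ^ ((n * d : ℝ) / 3) * 2 ^ ((n * d : ℝ) / 12) * 2 ^ ((m : ℝ) / 6) := by
        gcongr; exact hvertex.trans hpow
    _ = 2 ^ ((n * d : ℝ) / 3 + (n * d : ℝ) / 12 + (m : ℝ) / 6) := by
        rw [Real.rpow_add two_pos, Real.rpow_add two_pos]
    _ ≤ 2 ^ (m : ℝ) := by gcongr <;> linarith
    _ = 2 ^ m := Real.rpow_natCast 2 m

namespace SimpleGraph

variable {V W : Type*}

theorem ncard_neighborSet_eq_degree (G : SimpleGraph V) (v : V) [Fintype (G.neighborSet v)] :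
    (G.neighborSet v).ncard = G.degree v := by
  rw [Set.ncard_eq_toFinset_card', ← neighborFinset_def, card_neighborFinset_eq_degree]

theorem Connected.exists_parent {T : SimpleGraph V} (hT : T.Connected) (r : V) :
    ∃ p : V → V, ∀ v ≠ r, T.Adj (p v) v ∧ T.dist (p v) r < T.dist v r := by
  have hparent : ∀ v, ∃ u, v ≠ r → T.Adj u v ∧ T.dist u r < T.dist v r := by
    intro v
    obtain ⟨w, hw⟩ := hT.exists_walk_length_eq_dist v r
    cases w with
    | nil => exact ⟨r, fun h => absurd rfl h⟩
    | cons hadj q =>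
      refine ⟨_, fun _ => ⟨hadj.symm, ?_⟩⟩
      have := dist_le q
      simp only [Walk.length_cons] at hw
      omega
  choose p hp using hparent
  exact ⟨p, hp⟩

theorem edgeSet_fromEdgeSet_of_subset {G : SimpleGraph V} {s : Set (Sym2 V)}
    (hs : s ⊆ G.edgeSet) : (fromEdgeSet s).edgeSet = s := by
  rw [edgeSet_fromEdgeSet, sdiff_eq_left, ← Set.subset_compl_iff_disjoint_right]
  exact hs.trans G.edgeSet_subset_compl_diagSet

theorem degree_le_of_comap_le [Fintype V] [Fintype W] {G : SimpleGraph V} [DecidableRel G.Adj]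
    (H : SimpleGraph W) [DecidableRel H.Adj] {σ : V ≃ W} (hσ : H.comap σ ≤ G) (v : V) :
    H.degree (σ v) ≤ G.degree v := by
  classical
  rw [← Iso.comap_apply σ H v, Iso.degree_eq]
  exact degree_le_of_le hσ

theorem card_mul_le_two_mul_card_edgeFinset [Fintype V] {G : SimpleGraph V} [DecidableRel G.Adj]
    {d : ℕ} (hG : ∀ v, d ≤ G.degree v) : Fintype.card V * d ≤ 2 * #G.edgeFinset := by
  rw [← sum_degrees_eq_twice_card_edges]
  simpa using sum_le_sum fun v (_ : v ∈ univ) => hG v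

def labeledSubgraphs (G : SimpleGraph V) (W : Type*) : Set (SimpleGraph W) :=
  {H | ∃ φ : W ↪ V, ∀ u v, H.Adj u v → G.Adj (φ u) (φ v)}

variable [Fintype V] [DecidableEq V] [Fintype W]

theorem sum_degree_parent_le {G T : SimpleGraph V} [DecidableRel G.Adj] [DecidableRel T.Adj]
    {r : V} {p : V → V} (hp : ∀ v ≠ r, T.Adj (p v) v) {d : ℕ} (hT : ∀ v, T.degree v ≤ d) :
    ∑ v ∈ univ.erase r, G.degree (p v) ≤ d * (2 * #G.edgeFinset) := by
  rw [← sum_degrees_eq_twice_card_edges, ← smul_eq_mul]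
  refine sum_comp_le_nsmul_sum (f := (G.degree ·)) (fun v _ => mem_univ (p v))
    (fun _ _ => Nat.zero_le _) fun u _ => le_trans (card_le_card fun v hv => ?_) (hT u)
  obtain ⟨hvr, rfl⟩ := mem_filter.1 hv
  exact (mem_neighborFinset _ _ _).2 (hp v (ne_of_mem_erase hvr))

theorem prod_degree_parent_le {G T : SimpleGraph V} [DecidableRel G.Adj] [DecidableRel T.Adj]
    {r : V} {p : V → V} (hp : ∀ v ≠ r, T.Adj (p v) v) {d : ℕ} (hd : 0 < d)
    (hT : ∀ v, T.degree v ≤ d) :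
    (∏ v ∈ univ.erase r, G.degree (p v) : ℝ) ≤
      (12 * d) ^ (Fintype.card V - 1) * 2 ^ ((#G.edgeFinset : ℝ) / 6) := by
  have hd0 : (0 : ℝ) < 12 * d := by positivity
  have hsum : ∑ v ∈ univ.erase r, (G.degree (p v) : ℝ) ≤ d * (2 * #G.edgeFinset) := by
    exact_mod_cast sum_degree_parent_le hp hT
  have hexp :
      (∑ v ∈ univ.erase r, (G.degree (p v) : ℝ)) / (12 * d) ≤ #G.edgeFinset / 6 := by
    rw [div_le_iff₀ hd0]; linarith
  calc (∏ v ∈ univ.erase r, G.degree (p v) : ℝ)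
      ≤ (12 * d) ^ #(univ.erase r) *
          2 ^ ((∑ v ∈ univ.erase r, (G.degree (p v) : ℝ)) / (12 * d)) :=
        Real.prod_le_pow_card_mul_two_rpow (fun _ _ => Nat.cast_nonneg _) hd0
    _ ≤ (12 * d) ^ (Fintype.card V - 1) * 2 ^ ((#G.edgeFinset : ℝ) / 6) := by
        rw [card_erase_of_mem (mem_univ r), card_univ]
        exact mul_le_mul_of_nonneg_left (Real.rpow_le_rpow_of_exponent_le one_le_two hexp)
          (by positivity)

theorem card_le_card_mul_prod_of_adj_parent [DecidableEq W] (H : SimpleGraph W)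
    [DecidableRel H.Adj] {r : V} {p : V → V} (μ : V → ℕ) (hμ : ∀ v ≠ r, μ (p v) < μ v)
    (c : V → ℕ) (S : Finset (V → W))
    (hS : ∀ g ∈ S, ∀ v ≠ r, H.Adj (g (p v)) (g v) ∧ H.degree (g (p v)) ≤ c v) :
    #S ≤ Fintype.card W * ∏ v ∈ univ.erase r, c v := by
  -- code `g` by `g r` and, at every other vertex `v`, the position of `g v` in the list of
  -- neighbours of `g (p v)`
  let code : (V → W) → W × (V → ℕ) := fun g =>
    (g r, fun v => if v = r then 0 else (H.neighborFinset (g (p v))).toList.idxOf (g v))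
  let box : Finset (W × (V → ℕ)) :=
    univ ×ˢ Fintype.piFinset fun v => if v = r then {0} else range (c v)
  have hmaps : ∀ g ∈ S, code g ∈ box := by
    intro g hg
    simp only [box, code, mem_product, mem_univ, true_and, Fintype.mem_piFinset]
    intro v
    split_ifs with hv
    · exact mem_singleton_self 0
    · obtain ⟨hadj, hdeg⟩ := hS g hg v hv
      rw [mem_range]
      refine lt_of_lt_of_le ?_ hdeg
      rw [← card_neighborFinset_eq_degree, ← length_toList]
      exact List.idxOf_lt_length_iff.2 (mem_toList.2 ((H.mem_neighborFinset _ _).2 hadj))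
  have hinj : Set.InjOn code S := by
    intro g hg g' hg' hcode
    funext v
    induction v using (measure μ).wf.induction with
    | _ v ih =>
      by_cases hv : v = r
      · subst hv; exact congrArg Prod.fst hcode
      · have hpar : g (p v) = g' (p v) := ih (p v) (hμ v hv)
        have hidx := congrFun (congrArg Prod.snd hcode) v
        simp only [code, if_neg hv] at hidx
        rw [hpar] at hidx
        exact (List.idxOf_inj (mem_toList.2
          ((H.mem_neighborFinset _ _).2 (hpar ▸ (hS g hg v hv).1)))).1 hidx
  have hbox : #box = Fintype.card W * ∏ v ∈ univ.erase r, c v := by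
    rw [card_product, card_univ, Fintype.card_piFinset, ← mul_prod_erase _ _ (mem_univ r)]
    simp only [if_pos, card_singleton, one_mul]
    congr 1
    refine prod_congr rfl fun v hv => ?_
    rw [if_neg (ne_of_mem_erase hv), card_range]
  exact hbox ▸ card_le_card_of_injOn code hmaps hinj

variable {G T : SimpleGraph V} [DecidableRel G.Adj]

theorem fromEdgeSet_mem_Icc [DecidableRel T.Adj] {s : Finset (Sym2 V)}
    (hs : s ∈ Icc T.edgeFinset G.edgeFinset) :
    T ≤ fromEdgeSet (s : Set (Sym2 V)) ∧ fromEdgeSet (s : Set (Sym2 V)) ≤ G := by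
  rw [mem_Icc, ← coe_subset, ← coe_subset, coe_edgeFinset, coe_edgeFinset] at hs
  rw [← edgeSet_subset_edgeSet, ← edgeSet_subset_edgeSet, edgeSet_fromEdgeSet_of_subset hs.2]
  exact hs

theorem card_le_of_forall_comap_mem_Icc [DecidableEq W] (H : SimpleGraph W)
    [DecidableRel H.Adj] {r : V} {p : V → V} (μ : V → ℕ)
    (hp : ∀ v ≠ r, T.Adj (p v) v ∧ μ (p v) < μ v)
    (S : Finset (V ≃ W)) (hS : ∀ σ ∈ S, T ≤ H.comap σ ∧ H.comap σ ≤ G) :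
    #S ≤ Fintype.card W * ∏ v ∈ univ.erase r, G.degree (p v) := by
  rw [← card_image_of_injective S DFunLike.coe_injective]
  refine card_le_card_mul_prod_of_adj_parent H μ (fun v hv => (hp v hv).2) _ _ ?_
  simp only [mem_image]
  rintro _ ⟨σ, hσ, rfl⟩ v hv
  obtain ⟨hTH, hHG⟩ := hS σ hσ
  exact ⟨hTH (hp v hv).1, degree_le_of_comap_le H hHG (p v)⟩

theorem factorial_mul_two_pow_le_mul_ncard_labeledSubgraphs [DecidableRel T.Adj] (hTG : T ≤ G)
    (hcard : Fintype.card W = Fintype.card V) {r : V} {p : V → V} (μ : V → ℕ)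
    (hp : ∀ v ≠ r, T.Adj (p v) v ∧ μ (p v) < μ v) :
    (Fintype.card V).factorial * 2 ^ (#G.edgeFinset - #T.edgeFinset) ≤
      (Fintype.card W * ∏ v ∈ univ.erase r, G.degree (p v)) * (G.labeledSubgraphs W).ncard := by
  classical
  let A := (univ : Finset (V ≃ W)) ×ˢ Icc T.edgeFinset G.edgeFinset
  let Φ : (V ≃ W) × Finset (Sym2 V) → SimpleGraph W :=
    fun x => x.1.simpleGraph (fromEdgeSet (x.2 : Set (Sym2 V)))
  have hA : #A = (Fintype.card V).factorial * 2 ^ (#G.edgeFinset - #T.edgeFinset) := by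
    rw [card_product, card_univ, Fintype.card_equiv (Fintype.equivOfCardEq hcard.symm),
      card_Icc_finset (edgeFinset_mono hTG)]
  have hfiber : ∀ H ∈ A.image Φ, #{x ∈ A | Φ x = H} ≤
      Fintype.card W * ∏ v ∈ univ.erase r, G.degree (p v) := by
    intro H _
    have hcomap : ∀ x ∈ A, Φ x = H → H.comap x.1 = fromEdgeSet (x.2 : Set (Sym2 V)) := by
      rintro ⟨σ, s⟩ _ rfl; ext; simp [Φ]
    rw [← card_image_of_injOn (f := Prod.fst) ?_]
    · refine card_le_of_forall_comap_mem_Icc H μ hp _ ?_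
      simp only [mem_image, mem_filter]
      rintro _ ⟨x, ⟨hxA, hxH⟩, rfl⟩
      rw [hcomap x hxA hxH]
      exact fromEdgeSet_mem_Icc (mem_product.1 hxA).2
    · rintro ⟨σ, s⟩ hx ⟨σ', s'⟩ hx' (rfl : σ = σ')
      simp only [coe_filter, Set.mem_ofPred_eq] at hx hx'
      have hss' := (hcomap _ hx.1 hx.2).symm.trans (hcomap (σ, s') hx'.1 hx'.2)
      have hs := (mem_Icc.1 (mem_product.1 hx.1).2).2
      have hs' := (mem_Icc.1 (mem_product.1 hx'.1).2).2
      rw [← coe_subset, coe_edgeFinset] at hs hs'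
      rw [Prod.mk.injEq, ← coe_inj, ← edgeSet_fromEdgeSet_of_subset hs,
        ← edgeSet_fromEdgeSet_of_subset hs', hss']
      exact ⟨rfl, rfl⟩
  have hlabeled : ↑(A.image Φ) ⊆ G.labeledSubgraphs W := by
    simp only [coe_image, Set.image_subset_iff]
    rintro ⟨σ, s⟩ hx
    refine ⟨σ.symm.toEmbedding, fun u v huv => (fromEdgeSet_mem_Icc (mem_product.1 hx).2).2 ?_⟩
    simpa [Φ] using huv
  calc _ = #A := hA.symm
    _ ≤ _ * #(A.image Φ) := card_le_mul_card_image A _ hfiber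
    _ ≤ _ := by
      gcongr
      rw [← Set.ncard_coe_finset]
      exact Set.ncard_le_ncard hlabeled (Set.toFinite _)

end SimpleGraph

theorem many_labeled_subgraphs_general {V : Type*} [Fintype V]
    (G : SimpleGraph V) (n d : ℕ)
    (hn : Fintype.card V = n)
    (hd : 1000 ≤ d)
    (hmin : ∀ v : V, d ≤ (G.neighborSet v).ncard)
    (htree : ∃ T : SimpleGraph V, T ≤ G ∧ T.IsTree ∧
      ∀ v : V, (T.neighborSet v).ncard ≤ d) :
    (n.factorial : ℝ) * (2 : ℝ) ^ ((n * d : ℝ) / 3) ≤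
      (({H : SimpleGraph (Fin n) |
        ∃ φ : Fin n ↪ V, ∀ u v : Fin n, H.Adj u v → G.Adj (φ u) (φ v)}.ncard : ℕ) : ℝ) := by
  classical
  subst hn
  obtain ⟨T, hTG, hT, hTdeg⟩ := htree
  simp only [SimpleGraph.ncard_neighborSet_eq_degree] at hmin hTdeg
  obtain ⟨r⟩ := hT.connected.nonempty
  obtain ⟨p, hp⟩ := hT.connected.exists_parent r
  set n := Fintype.card V
  set m := #G.edgeFinset
  set P := ∏ v ∈ univ.erase r, G.degree (p v)
  change _ ≤ ((G.labeledSubgraphs (Fin n)).ncard : ℝ)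
  have hTedges : #T.edgeFinset = n - 1 := by have := hT.card_edgeFinset; omega
  have hm : n - 1 ≤ m := hTedges ▸ card_le_card (SimpleGraph.edgeFinset_mono hTG)
  have hcount := SimpleGraph.factorial_mul_two_pow_le_mul_ncard_labeledSubgraphs hTG
    (Fintype.card_fin n) (T.dist · r) hp
  rw [hTedges, Fintype.card_fin] at hcount
  have hbudget := two_rpow_mul_le_two_pow hd (G.card_mul_le_two_mul_card_edgeFinset hmin)
    (G.prod_degree_parent_le (fun v hv => (hp v hv).1) (by omega) hTdeg)
  have hPpos : 0 < P := prod_pos fun v _ => lt_of_lt_of_le (by omega) (hmin (p v))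
  have hn0 : 0 < n := Fintype.card_pos_iff.2 ⟨r⟩
  refine le_of_mul_le_mul_right (a := (n * P * 2 ^ (n - 1) : ℝ)) ?_ (by positivity)
  calc _ ≤ (n.factorial : ℝ) * 2 ^ m := by
        rw [mul_assoc]; gcongr; exact_mod_cast hbudget
    _ = n.factorial * 2 ^ (m - (n - 1)) * 2 ^ (n - 1) := by
        rw [mul_assoc, ← pow_add, Nat.sub_add_cancel hm]
    _ ≤ (n * P) * (G.labeledSubgraphs (Fin n)).ncard * 2 ^ (n - 1) :=
        mul_le_mul_of_nonneg_right (by exact_mod_cast hcount) (by positivity)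
    _ = _ := by ring

/-- Let `G` be a connected graph on `n` vertices with minimum degree
`d ≥ 1000` having a spanning tree of maximum degree at most `d`. Then the number of
(labeled) graphs with vertex set `{1, …, n}` isomorphic to a subgraph of `G` is at least
`n! * 2 ^ (n * d / 3)`. -/
theorem many_labeled_subgraphs {V : Type*} [Fintype V]
    (G : SimpleGraph V) (n d : ℕ)
    (hn : Fintype.card V = n)
    (hconn : G.Connected) (hd : 1000 ≤ d)
    (hmin : ∀ v : V, d ≤ (G.neighborSet v).ncard)
    (htree : ∃ T : SimpleGraph V, T ≤ G ∧ T.IsTree ∧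
      ∀ v : V, (T.neighborSet v).ncard ≤ d) :
    (n.factorial : ℝ) * (2 : ℝ) ^ ((n * d : ℝ) / 3) ≤
      (({H : SimpleGraph (Fin n) |
        ∃ φ : Fin n ↪ V, ∀ u v : Fin n, H.Adj u v → G.Adj (φ u) (φ v)}.ncard : ℕ) : ℝ) :=
  many_labeled_subgraphs_general G n d hn hd hmin htree
end

section
/- Let f : ℝ₊ → ℝ₊ be a (δ,C,s)-decent function for some constants δ ∈ (0,1), C ≥ 1, s ≥ 2, let c > 0 be a constant, and for every n ∈ ℕ let Mₙ be a set of (c·f)-good n-vertex graphs with |Mₙ| ≤ ⌈2^{√(n·f(n))}⌉ (counting isomorphism classes). Then the monotone closure 𝒳 = Mon(∪ₙ Mₙ), the smallest subgraph-closed class containing all graphs in all Mₙ, satisfies |𝒳ₙ| ≤ 2^{K·n·f(n)} for some constant K and all sufficiently large n; i.e., 𝒳 has speed 2^{O(n·f(n))}. -/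
open Real

/-- A non-decreasing function `f : ℝ₊ → ℝ₊` is `(δ, C, s)`-decent (for `δ ∈ (0,1)`,
`C ≥ 1`, `s ≥ 2`) if `log₂ x ≤ f x ≤ C * x ^ (1 - δ)` for all `x ≥ s` (moderate growth)
and `f (x * y) ≤ C * f x * f y` for all `x, y ≥ s` (sub-multiplicativity). -/
def Decent (δ C s : ℝ) (f : ℝ → ℝ) : Prop :=
  (0 < δ ∧ δ < 1) ∧ 1 ≤ C ∧ 2 ≤ s ∧
  (∀ x : ℝ, 0 ≤ x → 0 ≤ f x) ∧
  (∀ x y : ℝ, 0 ≤ x → x ≤ y → f x ≤ f y) ∧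
  (∀ x : ℝ, s ≤ x → Real.logb 2 x ≤ f x ∧ f x ≤ C * x ^ (1 - δ)) ∧
  (∀ x y : ℝ, s ≤ x → s ≤ y → f (x * y) ≤ C * f x * f y)

/-- The number of edges of `G` with both endpoints in `A`. -/
noncomputable def edgesWithin {n : ℕ} (G : SimpleGraph (Fin n)) (A : Finset (Fin n)) : ℕ :=
  {e ∈ G.edgeSet | ∀ v ∈ e, v ∈ A}.ncard

/-- An `n`-vertex graph `G` is `f`-good if every subgraph on `k ≥ 2` vertices has at most
`k * f k / log₂ k` edges when `k ≤ √n`, and at most `k * f k` edges when `√n < k ≤ n`. -/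
def IsGood (f : ℝ → ℝ) {n : ℕ} (G : SimpleGraph (Fin n)) : Prop :=
  ∀ A : Finset (Fin n), 2 ≤ A.card →
    ((A.card : ℝ) ≤ Real.sqrt n →
      (edgesWithin G A : ℝ) ≤ A.card * f A.card / Real.logb 2 A.card) ∧
    (Real.sqrt n < (A.card : ℝ) →
      (edgesWithin G A : ℝ) ≤ A.card * f A.card)

/-- The monotone closure of a family of graphs: the smallest subgraph-closed class
containing, for every `n`, all graphs of `M n`. -/
def MonClosure (M : GraphClass) : GraphClass :=
  fun _m => {H | ∃ n : ℕ, ∃ G ∈ M n, IsSubgraphOf H G}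

/-!
A graph `H` on `n` vertices in the closure sits inside a host `G ∈ M N`. If `N ≥ n²` then
`n ≤ √N`, so goodness of `G` gives `H` at most `c n f(n) / log₂ n` edges, and there are only
`2^{O(n f(n))}` such graphs. If `N < n²`, `H` is a subgraph of the restriction of an
isomorphism-class representative of `G` to an `n`-set; that restriction has at most `c n f(n)`
edges, and it is fixed by choosing `N < n²`, one of at most `2^{√(N f(N))} ≤ 2^{√C n f(n)}`
representatives (sub-multiplicativity: `f(N) ≤ f(n²) ≤ C f(n)²`) and one of at most `n^{2n}`
embeddings. Each choice contributes at most `2^{c n f(n)}` subgraphs.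
-/

namespace SimpleGraph

variable {V : Type*} [Fintype V]

def sparseGraphs (V : Type*) (m : ℕ) : Set (SimpleGraph V) := {H | H.edgeSet.ncard ≤ m}

theorem ncard_Iic_le_two_pow (P : SimpleGraph V) : (Set.Iic P).ncard ≤ 2 ^ P.edgeSet.ncard := by
  rw [← Set.ncard_powerset P.edgeSet]
  exact Set.ncard_le_ncard_of_injOn edgeSet (fun H hH => edgeSet_mono hH)
    edgeSet_injective.injOn

theorem ncard_lowerClosure_le {S : Set (SimpleGraph V)} {m : ℕ} (hS : S ⊆ sparseGraphs V m) :
    (lowerClosure S : Set (SimpleGraph V)).ncard ≤ S.ncard * 2 ^ m := by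
  rw [coe_lowerClosure, ← S.toFinite.coe_toFinset, Set.ncard_coe_finset]
  refine (Finset.set_ncard_biUnion_le _ _).trans (Finset.sum_le_card_nsmul _ _ _ fun P hP => ?_)
  rw [Set.Finite.mem_toFinset] at hP
  exact (ncard_Iic_le_two_pow P).trans (Nat.pow_le_pow_right two_pos (hS hP))

theorem ncard_sparseGraphs_le [Nonempty V] (m : ℕ) :
    (sparseGraphs V m).ncard ≤ (m + 1) * (Fintype.card V ^ 2) ^ m := by
  have hsym : Nat.card (Sym2 V) ≤ Fintype.card V ^ 2 := by
    rw [Nat.card_eq_fintype_card, Sym2.card, Nat.choose_two_right, Nat.add_sub_cancel]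
    exact Nat.div_le_of_le_mul (by nlinarith)
  calc (sparseGraphs V m).ncard
      ≤ (⋃ i ∈ Finset.range (m + 1), {t ⊆ (Set.univ : Set (Sym2 V)) | t.ncard = i}).ncard := by
        refine Set.ncard_le_ncard_of_injOn edgeSet (fun H hH => ?_) edgeSet_injective.injOn
        simp only [Set.mem_iUnion]
        exact ⟨_, Finset.mem_range.2 (Nat.lt_succ_of_le hH), Set.subset_univ _, rfl⟩
    _ ≤ ∑ i ∈ Finset.range (m + 1), (Nat.card (Sym2 V)).choose i := by
        refine (Finset.set_ncard_biUnion_le _ _).trans_eq (Finset.sum_congr rfl fun i _ => ?_)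
        rw [Set.ncard_powerset_ncard Set.finite_univ, Set.ncard_univ]
    _ ≤ ∑ _i ∈ Finset.range (m + 1), (Fintype.card V ^ 2) ^ m := by
        refine Finset.sum_le_sum fun i hi => ?_
        calc (Nat.card (Sym2 V)).choose i ≤ (Fintype.card V ^ 2) ^ i :=
              (Nat.choose_le_pow _ _).trans (Nat.pow_le_pow_left hsym i)
          _ ≤ (Fintype.card V ^ 2) ^ m :=
              Nat.pow_le_pow_right (by positivity) (Nat.le_of_lt_succ (Finset.mem_range.1 hi))
    _ = (m + 1) * (Fintype.card V ^ 2) ^ m := by simp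

end SimpleGraph

open SimpleGraph

namespace GraphClass

def restrictions (R : GraphClass) (n N : ℕ) : Set (SimpleGraph (Fin n)) :=
  Set.image2 (fun G (φ : Fin n ↪ Fin N) => G.comap φ) (R N) Set.univ

theorem ncard_restrictions_le (R : GraphClass) (n N : ℕ) :
    (restrictions R n N).ncard ≤ (R N).ncard * N ^ n := by
  rw [restrictions, ← Set.image_uncurry_prod]
  refine (Set.ncard_image_le (Set.toFinite _)).trans ?_
  rw [Set.ncard_prod, Set.ncard_univ, Nat.card_eq_fintype_card, Fintype.card_embedding_eq,
    Fintype.card_fin, Fintype.card_fin]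
  exact Nat.mul_le_mul_left _ (Nat.descFactorial_le_pow N n)

def sparseRestrictionSubgraphs (R : GraphClass) (n m : ℕ) : Set (SimpleGraph (Fin n)) :=
  lowerClosure ((⋃ N ∈ Finset.range (n ^ 2), restrictions R n N) ∩ sparseGraphs (Fin n) m)

theorem ncard_sparseRestrictionSubgraphs_le (R : GraphClass) (n m : ℕ) :
    (sparseRestrictionSubgraphs R n m).ncard ≤
      (∑ N ∈ Finset.range (n ^ 2), (R N).ncard * N ^ n) * 2 ^ m := by
  refine (ncard_lowerClosure_le Set.inter_subset_right).trans (Nat.mul_le_mul_right _ ?_)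
  refine (Set.ncard_le_ncard Set.inter_subset_left (Set.toFinite _)).trans ?_
  exact (Finset.set_ncard_biUnion_le _ _).trans
    (Finset.sum_le_sum fun N _ => ncard_restrictions_le R n N)

end GraphClass

theorem ncard_edgeSet_comap_le_edgesWithin {m n : ℕ} (G : SimpleGraph (Fin n))
    (φ : Fin m ↪ Fin n) : (G.comap φ).edgeSet.ncard ≤ edgesWithin G (Finset.univ.map φ) := by
  rw [edgesWithin, ← Set.ncard_image_of_injective _ (Sym2.map.injective φ.injective)]
  refine Set.ncard_le_ncard (fun e he => ?_) (Set.toFinite _)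
  obtain ⟨e, he', rfl⟩ := he
  induction e with
  | h u v =>
    refine ⟨he', fun w hw => ?_⟩
    rw [Sym2.map_mk, Sym2.mem_iff] at hw
    rcases hw with rfl | rfl <;> exact Finset.mem_map_of_mem φ (Finset.mem_univ _)

section IsGood

variable {g : ℝ → ℝ} {m N : ℕ} {G : SimpleGraph (Fin N)}

theorem IsGood.ncard_edgeSet_comap_le_of_le_sqrt (hG : IsGood g G) (φ : Fin m ↪ Fin N)
    (hm : 2 ≤ m) (hmN : (m : ℝ) ≤ √N) :
    ((G.comap φ).edgeSet.ncard : ℝ) ≤ m * g m / logb 2 m := by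
  have h := hG (Finset.univ.map φ) (by simpa using hm)
  rw [Finset.card_map, Finset.card_univ, Fintype.card_fin] at h
  exact (Nat.cast_le.2 (ncard_edgeSet_comap_le_edgesWithin G φ)).trans (h.1 hmN)

theorem IsGood.ncard_edgeSet_comap_le_of_sqrt_lt (hG : IsGood g G) (φ : Fin m ↪ Fin N)
    (hm : 2 ≤ m) (hmN : √N < m) : ((G.comap φ).edgeSet.ncard : ℝ) ≤ m * g m := by
  have h := hG (Finset.univ.map φ) (by simpa using hm)
  rw [Finset.card_map, Finset.card_univ, Fintype.card_fin] at h
  exact (Nat.cast_le.2 (ncard_edgeSet_comap_le_edgesWithin G φ)).trans (h.2 hmN)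

end IsGood

theorem monClosure_subset {M R : GraphClass} {g : ℝ → ℝ}
    (hgood : ∀ N, ∀ G ∈ M N, IsGood g G) (hR : ∀ N, ∀ G ∈ M N, ∃ G' ∈ R N, Nonempty (G ≃g G'))
    {n : ℕ} (hn : 2 ≤ n) :
    MonClosure M n ⊆ sparseGraphs (Fin n) ⌊n * g n / logb 2 n⌋₊ ∪
      R.sparseRestrictionSubgraphs n ⌊n * g n⌋₊ := by
  rintro H ⟨N, G, hG, φ, hφ⟩
  have hHG : H ≤ G.comap φ := fun u v h => hφ u v h
  by_cases hN : n ^ 2 ≤ N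
  · left
    have hsqrt : (n : ℝ) ≤ √N := Real.le_sqrt_of_sq_le (by exact_mod_cast hN)
    refine Nat.le_floor ((Nat.cast_le.2 (Set.ncard_le_ncard (edgeSet_mono hHG))).trans ?_)
    exact (hgood N G hG).ncard_edgeSet_comap_le_of_le_sqrt φ hn hsqrt
  · right
    obtain ⟨G', hG', ⟨ψ⟩⟩ := hR N G hG
    have hcomap : G'.comap (φ.trans ψ.toEquiv.toEmbedding) = G.comap φ := by
      ext u v
      exact ψ.map_adj_iff
    have hsqrt : √N < n := by
      rw [Real.sqrt_lt' (by positivity)]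
      exact_mod_cast not_le.1 hN
    refine ⟨G.comap φ, ⟨?_, ?_⟩, hHG⟩
    · exact Set.mem_biUnion (Finset.mem_range.2 (not_le.1 hN))
        ⟨G', hG', φ.trans ψ.toEquiv.toEmbedding, Set.mem_univ _, hcomap⟩
    · exact Nat.le_floor ((hgood N G hG).ncard_edgeSet_comap_le_of_sqrt_lt φ hn hsqrt)

theorem natCast_pow_eq_two_rpow {n : ℕ} (hn : 0 < n) (k : ℕ) :
    (n : ℝ) ^ k = 2 ^ (k * logb 2 n) := by
  calc (n : ℝ) ^ k = ((2 : ℝ) ^ logb 2 n) ^ k := by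
        rw [Real.rpow_logb two_pos (by norm_num) (by positivity)]
    _ = 2 ^ (k * logb 2 n) := by
        rw [← Real.rpow_natCast, ← Real.rpow_mul zero_le_two, mul_comm]

theorem one_le_logb_two_natCast {n : ℕ} (hn : 2 ≤ n) : 1 ≤ logb 2 n := by
  rw [Real.le_logb_iff_rpow_le one_lt_two (by positivity), Real.rpow_one]
  exact_mod_cast hn

theorem cast_ncard_sparseGraphs_le {n : ℕ} (hn : 2 ≤ n) (m : ℕ) :
    ((sparseGraphs (Fin n) m).ncard : ℝ) ≤ 2 ^ (3 * (m * logb 2 n)) := by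
  have hL := one_le_logb_two_natCast hn
  have : Nonempty (Fin n) := ⟨⟨0, by omega⟩⟩
  have hm : (m + 1 : ℝ) ≤ 2 ^ (m : ℝ) := by
    rw [Real.rpow_natCast]
    exact_mod_cast Nat.lt_two_pow_self
  calc ((sparseGraphs (Fin n) m).ncard : ℝ) ≤ (m + 1) * (n : ℝ) ^ (2 * m) := by
        have := ncard_sparseGraphs_le (V := Fin n) m
        rw [Fintype.card_fin, ← pow_mul] at this
        exact_mod_cast this
    _ ≤ 2 ^ (m : ℝ) * 2 ^ ((2 * m : ℕ) * logb 2 n) := by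
        rw [natCast_pow_eq_two_rpow (by omega)]
        gcongr
    _ ≤ 2 ^ (3 * (m * logb 2 n)) := by
        rw [← Real.rpow_add two_pos]
        exact Real.rpow_le_rpow_of_exponent_le one_le_two (by push_cast; nlinarith)

theorem cast_ncard_sparseRestrictionSubgraphs_le {R : GraphClass} {n : ℕ} (hn : 0 < n)
    (m : ℕ) {a : ℝ} (hR : ∀ N < n ^ 2, ((R N).ncard : ℝ) ≤ 2 ^ a) :
    ((R.sparseRestrictionSubgraphs n m).ncard : ℝ) ≤ 2 ^ ((2 * n + 2) * logb 2 n + a + m) := by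
  have hsum : ((∑ N ∈ Finset.range (n ^ 2), (R N).ncard * N ^ n : ℕ) : ℝ) ≤
      (n : ℝ) ^ 2 * (2 ^ a * (n : ℝ) ^ (2 * n)) := by
    push_cast
    refine (Finset.sum_le_card_nsmul _ _ (2 ^ a * (n : ℝ) ^ (2 * n)) fun N hN => ?_).trans_eq
      (by rw [Finset.card_range, nsmul_eq_mul]; push_cast; rfl)
    have hN : N < n ^ 2 := Finset.mem_range.1 hN
    gcongr
    · exact hR N hN
    · rw [pow_mul]
      gcongr
      exact_mod_cast hN.le
  calc ((R.sparseRestrictionSubgraphs n m).ncard : ℝ)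
      ≤ ((∑ N ∈ Finset.range (n ^ 2), (R N).ncard * N ^ n : ℕ) : ℝ) * 2 ^ m := by
        exact_mod_cast R.ncard_sparseRestrictionSubgraphs_le n m
    _ ≤ (n : ℝ) ^ 2 * (2 ^ a * (n : ℝ) ^ (2 * n)) * 2 ^ (m : ℝ) := by
        rw [Real.rpow_natCast]
        gcongr
    _ = 2 ^ ((2 * n + 2) * logb 2 n + a + m) := by
        rw [natCast_pow_eq_two_rpow hn, natCast_pow_eq_two_rpow hn, ← Real.rpow_add two_pos,
          ← Real.rpow_add two_pos, ← Real.rpow_add two_pos]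
        push_cast
        ring_nf

theorem cast_ncard_monClosure_le {M R : GraphClass} {g : ℝ → ℝ}
    (hgood : ∀ N, ∀ G ∈ M N, IsGood g G) (hR : ∀ N, ∀ G ∈ M N, ∃ G' ∈ R N, Nonempty (G ≃g G'))
    {n : ℕ} (hn : 2 ≤ n) {a : ℝ} (hRa : ∀ N < n ^ 2, ((R N).ncard : ℝ) ≤ 2 ^ a) :
    ((MonClosure M n).ncard : ℝ) ≤ 2 ^ (3 * (⌊n * g n / logb 2 n⌋₊ * logb 2 n)) +
      2 ^ ((2 * n + 2) * logb 2 n + a + ⌊n * g n⌋₊) := by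
  calc ((MonClosure M n).ncard : ℝ)
      ≤ (sparseGraphs (Fin n) ⌊n * g n / logb 2 n⌋₊).ncard +
          (R.sparseRestrictionSubgraphs n ⌊n * g n⌋₊).ncard := by
        exact_mod_cast (Set.ncard_le_ncard (monClosure_subset hgood hR hn) (Set.toFinite _)).trans
          (Set.ncard_union_le _ _)
    _ ≤ _ := add_le_add (cast_ncard_sparseGraphs_le hn _)
        (cast_ncard_sparseRestrictionSubgraphs_le (by omega) _ hRa)

theorem natCeil_two_rpow_le {x y : ℝ} (hx : 0 ≤ x) (hxy : x ≤ y) :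
    (⌈(2 : ℝ) ^ x⌉₊ : ℝ) ≤ 2 ^ (y + 1) := by
  have h1 : (1 : ℝ) ≤ 2 ^ x := Real.one_le_rpow one_le_two hx
  calc (⌈(2 : ℝ) ^ x⌉₊ : ℝ) ≤ 2 ^ x + 1 := (Nat.ceil_lt_add_one (by positivity)).le
    _ ≤ 2 ^ (x + 1) := by rw [Real.rpow_add two_pos, Real.rpow_one]; linarith
    _ ≤ 2 ^ (y + 1) := Real.rpow_le_rpow_of_exponent_le one_le_two (by linarith)

theorem two_rpow_add_two_rpow_le {a b c : ℝ} (ha : a + 1 ≤ c) (hb : b + 1 ≤ c) :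
    (2 : ℝ) ^ a + 2 ^ b ≤ 2 ^ c := by
  have h : ∀ x, x + 1 ≤ c → (2 : ℝ) ^ x ≤ 2 ^ c / 2 := fun x hx => by
    rw [le_div_iff₀ two_pos, ← Real.rpow_add_one two_ne_zero]
    exact Real.rpow_le_rpow_of_exponent_le one_le_two hx
  linarith [h a ha, h b hb]

theorem Decent.sqrt_mul_le {δ C s : ℝ} {f : ℝ → ℝ} (hf : Decent δ C s f) {x y : ℝ}
    (hx : s ≤ x) (hy : 0 ≤ y) (hyx : y ≤ x ^ 2) : √(y * f y) ≤ C * (x * f x) := by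
  obtain ⟨-, hC, hs, hf0, hmono, -, hsubmul⟩ := hf
  have hx0 : 0 ≤ x := by linarith
  have hfx : 0 ≤ f x := hf0 x hx0
  have hfy : f y ≤ C * f x * f x :=
    (hmono y (x * x) hy (by nlinarith)).trans (hsubmul x x hx hx)
  have hfy0 : 0 ≤ f y := hf0 y hy
  rw [Real.sqrt_le_left (by positivity)]
  calc y * f y ≤ x ^ 2 * (C * f x * f x) := mul_le_mul hyx hfy hfy0 (by positivity)
    _ = C * (x * f x) ^ 2 := by ring
    _ ≤ C * C * (x * f x) ^ 2 := by gcongr; nlinarith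
    _ = (C * (x * f x)) ^ 2 := by ring

/-- Let `f` be `(δ, C, s)`-decent, `c > 0` a constant, and for each `n`
let `M n` be a set of `(c * f)`-good `n`-vertex graphs consisting of at most
`⌈2 ^ √(n * f n)⌉` isomorphism classes. Then the monotone closure `Mon(∪ₙ M n)` has speed
at most `2 ^ (K * n * f n)` for some constant `K` and all sufficiently large `n`. -/
theorem monClosure_of_good_speed (f : ℝ → ℝ) (δ C s : ℝ) (hf : Decent δ C s f)
    (c : ℝ) (hc : 0 < c) (M : GraphClass)
    (hgood : ∀ n : ℕ, ∀ G ∈ M n, IsGood (fun x => c * f x) G)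
    (hcard : ∀ n : ℕ, ∃ R : Set (SimpleGraph (Fin n)),
      R.ncard ≤ ⌈(2 : ℝ) ^ Real.sqrt ((n : ℝ) * f n)⌉₊ ∧
      ∀ G ∈ M n, ∃ G' ∈ R, Nonempty (G ≃g G')) :
    ∃ (K : ℝ) (n₀ : ℕ), 0 < K ∧
      ∀ n : ℕ, n₀ ≤ n → (((MonClosure M) n).ncard : ℝ) ≤ (2 : ℝ) ^ (K * n * f n) := by
  choose R hRcard hR using hcard
  have ⟨_, hC, hs, _, _, hgrowth, _⟩ := hf
  refine ⟨3 * c + C + 6, ⌈s⌉₊, by positivity, fun n hn => ?_⟩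
  have hsn : s ≤ n := Nat.ceil_le.1 hn
  have hn2 : 2 ≤ n := by exact_mod_cast hs.trans hsn
  have hL := one_le_logb_two_natCast hn2
  have hLf : logb 2 n ≤ f n := (hgrowth n hsn).1
  have hT : 1 ≤ n * f n :=
    one_le_mul_of_one_le_of_one_le (by exact_mod_cast (by omega : 1 ≤ n)) (hL.trans hLf)
  have hcfn : 0 ≤ n * (c * f n) := by nlinarith
  have hRn : ∀ N < n ^ 2, ((R N).ncard : ℝ) ≤ 2 ^ (C * (n * f n) + 1) := fun N hN =>
    (Nat.cast_le.2 (hRcard N)).trans <| natCeil_two_rpow_le (Real.sqrt_nonneg _) <|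
      hf.sqrt_mul_le hsn (Nat.cast_nonneg N) (by exact_mod_cast hN.le)
  refine (cast_ncard_monClosure_le hgood hR hn2 hRn).trans (two_rpow_add_two_rpow_le ?_ ?_)
  · have h := Nat.floor_le (div_nonneg hcfn (by linarith : (0:ℝ) ≤ logb 2 n))
    rw [le_div_iff₀ (by linarith)] at h
    nlinarith
  · have h := Nat.floor_le hcfn
    have : (2 : ℝ) ≤ n := by exact_mod_cast hn2
    nlinarith
end

section
/- Let f : ℝ₊ → ℝ₊ be non-decreasing and let 𝒳 be a monotone class of graphs with |𝒳ₙ| ≤ 2^{C·n·f(n)} for all n, for some constant C ≥ 1. Then every n-vertex graph in 𝒳 has at most C·n·f(n) edges, and every n-vertex graph in 𝒳 is 2C·f(n)-degenerate (every subgraph of it has a vertex of degree at most 2C·f(n)). -/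
open Real

/-!
The spanning subgraphs of `G` all lie in the monotone class, and there are `2 ^ e(G)` of them, so
`2 ^ e(G) ≤ |𝒳ₙ| ≤ 2 ^ (C n f(n))`. For the degeneracy, the subgraph induced on `A` is again in
the class (relabelled onto `Fin |A|`), so it has at most `C |A| f(|A|) ≤ |A| · C f(n)` edges; its
minimum degree is at most its average degree `2 e(G[A]) / |A| ≤ 2 C f(n)`.
-/

namespace SimpleGraph

variable {V W : Type*}

theorem two_pow_ncard_edgeSet_le [Finite V] (G : SimpleGraph V) {X : Set (SimpleGraph V)}
    (hX : ∀ H ≤ G, H ∈ X) : 2 ^ G.edgeSet.ncard ≤ X.ncard := by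
  have edgeSet_fromEdgeSet_of_subset : ∀ s ⊆ G.edgeSet, (fromEdgeSet s).edgeSet = s :=
    fun s hs => by
      rw [edgeSet_fromEdgeSet, sdiff_eq_left, ← Set.subset_compl_iff_disjoint_right]
      exact hs.trans G.edgeSet_subset_compl_diagSet
  rw [← Set.ncard_powerset G.edgeSet]
  refine Set.ncard_le_ncard_of_injOn fromEdgeSet (fun s hs => hX _ ?_) ?_
  · simpa using fromEdgeSet_mono (Set.mem_powerset_iff _ _ |>.mp hs)
  · intro s hs t ht hst
    simpa [edgeSet_fromEdgeSet_of_subset s hs, edgeSet_fromEdgeSet_of_subset t ht] using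
      congrArg edgeSet hst

theorem exists_card_mul_ncard_neighborSet_le [Fintype V] [Nonempty V] (G : SimpleGraph V) :
    ∃ v, Fintype.card V * (G.neighborSet v).ncard ≤ 2 * G.edgeSet.ncard := by
  classical
  obtain ⟨v, hv⟩ := G.exists_minimal_degree_vertex
  refine ⟨v, ?_⟩
  rw [← coe_neighborFinset, ← coe_edgeFinset, Set.ncard_coe_finset, Set.ncard_coe_finset,
    card_neighborFinset_eq_degree, ← sum_degrees_eq_twice_card_edges, ← hv]
  simpa using Finset.card_nsmul_le_sum Finset.univ _ _ fun w _ => G.minDegree_le_degree w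

theorem ncard_range_inter_neighborSet (G : SimpleGraph V) (φ : W ↪ V) (w : W) :
    (Set.range φ ∩ G.neighborSet (φ w)).ncard = ((G.comap φ).neighborSet w).ncard := by
  rw [← Set.image_preimage_eq_range_inter, Set.ncard_image_of_injective _ φ.injective]
  rfl

end SimpleGraph

namespace MonotoneGraphClass

variable {𝒳 : GraphClass}

theorem mem_of_le (h𝒳 : MonotoneGraphClass 𝒳) {n : ℕ} {G H : SimpleGraph (Fin n)}
    (hG : G ∈ 𝒳 n) (hHG : H ≤ G) : H ∈ 𝒳 n :=
  h𝒳 H G hG ⟨Function.Embedding.refl _, fun _ _ h => hHG h⟩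

theorem comap_mem (h𝒳 : MonotoneGraphClass 𝒳) {m n : ℕ} {G : SimpleGraph (Fin n)}
    (hG : G ∈ 𝒳 n) (φ : Fin m ↪ Fin n) : G.comap φ ∈ 𝒳 m :=
  h𝒳 _ G hG ⟨φ, fun _ _ h => h⟩

theorem ncard_edgeSet_le (h𝒳 : MonotoneGraphClass 𝒳) {n : ℕ} {G : SimpleGraph (Fin n)}
    (hG : G ∈ 𝒳 n) {b : ℝ} (hb : ((𝒳 n).ncard : ℝ) ≤ 2 ^ b) : (G.edgeSet.ncard : ℝ) ≤ b := by
  have hpow : (2 : ℝ) ^ (G.edgeSet.ncard : ℝ) ≤ 2 ^ b := calc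
    (2 : ℝ) ^ (G.edgeSet.ncard : ℝ) = ((2 ^ G.edgeSet.ncard : ℕ) : ℝ) := by norm_cast
    _ ≤ (𝒳 n).ncard := by
      exact_mod_cast G.two_pow_ncard_edgeSet_le fun H hH => h𝒳.mem_of_le hG hH
    _ ≤ 2 ^ b := hb
  exact (Real.rpow_le_rpow_left_iff one_lt_two).mp hpow

theorem exists_ncard_inter_neighborSet_le (h𝒳 : MonotoneGraphClass 𝒳) {n : ℕ}
    {G : SimpleGraph (Fin n)} (hG : G ∈ 𝒳 n) {d : ℝ}
    (hd : ∀ m ≤ n, ∀ H ∈ 𝒳 m, (H.edgeSet.ncard : ℝ) ≤ m * d)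
    (A : Finset (Fin n)) (hA : A.Nonempty) :
    ∃ v ∈ A, (((A : Set (Fin n)) ∩ G.neighborSet v).ncard : ℝ) ≤ 2 * d := by
  let φ : Fin A.card ↪ Fin n := (A.orderEmbOfFin rfl).toEmbedding
  have : Nonempty (Fin A.card) := ⟨⟨0, hA.card_pos⟩⟩
  obtain ⟨i, hi⟩ := (G.comap φ).exists_card_mul_ncard_neighborSet_le
  refine ⟨φ i, A.orderEmbOfFin_mem rfl i, ?_⟩
  have hrange : (A : Set (Fin n)) = Set.range φ := (A.range_orderEmbOfFin rfl).symm
  rw [hrange, G.ncard_range_inter_neighborSet]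
  rw [Fintype.card_fin] at hi
  have hsparse := hd _ (A.card_le_univ.trans_eq (Fintype.card_fin n)) _ (h𝒳.comap_mem hG φ)
  have hcard : (0 : ℝ) < A.card := by exact_mod_cast hA.card_pos
  refine le_of_mul_le_mul_left ?_ hcard
  calc (A.card : ℝ) * ((G.comap φ).neighborSet i).ncard
      ≤ 2 * ((G.comap φ).edgeSet.ncard : ℝ) := by exact_mod_cast hi
    _ ≤ 2 * (A.card * d) := by gcongr
    _ = A.card * (2 * d) := by ring

end MonotoneGraphClass

theorem monotone_speed_edges_degeneracy_general (f : ℝ → ℝ)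
    (hfmono : ∀ x y : ℝ, 0 ≤ x → x ≤ y → f x ≤ f y)
    (C : ℝ) (hC : 1 ≤ C) (𝒳 : GraphClass) (hmono : MonotoneGraphClass 𝒳)
    (hspeed : ∀ n : ℕ, ((𝒳 n).ncard : ℝ) ≤ (2 : ℝ) ^ (C * n * f n)) :
    ∀ n : ℕ, ∀ G ∈ 𝒳 n,
      ((G.edgeSet.ncard : ℝ) ≤ C * n * f n) ∧
      ∀ A : Finset (Fin n), A.Nonempty →
        ∃ v ∈ A, (((A : Set (Fin n)) ∩ G.neighborSet v).ncard : ℝ) ≤ 2 * C * f n := by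
  have hedges : ∀ n, ∀ G ∈ 𝒳 n, (G.edgeSet.ncard : ℝ) ≤ C * n * f n :=
    fun n G hG => hmono.ncard_edgeSet_le hG (hspeed n)
  intro n G hG
  have hsparse : ∀ m ≤ n, ∀ H ∈ 𝒳 m, (H.edgeSet.ncard : ℝ) ≤ m * (C * f n) :=
    fun m hmn H hH => calc
      (H.edgeSet.ncard : ℝ) ≤ C * m * f m := hedges m H hH
      _ ≤ C * m * f n := mul_le_mul_of_nonneg_left
        (hfmono _ _ m.cast_nonneg (by exact_mod_cast hmn))
        (mul_nonneg (zero_le_one.trans hC) m.cast_nonneg)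
      _ = m * (C * f n) := by ring
  refine ⟨hedges n G hG, fun A hA => ?_⟩
  simpa only [mul_assoc] using hmono.exists_ncard_inter_neighborSet_le hG hsparse A hA

/-- Let `f : ℝ₊ → ℝ₊` be non-decreasing and `𝒳` a monotone class with
`|𝒳ₙ| ≤ 2 ^ (C * n * f n)` for all `n`, for some constant `C ≥ 1`. Then every `n`-vertex
graph in `𝒳` has at most `C * n * f n` edges and is `2 * C * f n`-degenerate: every
nonempty vertex subset `A` contains a vertex with at most `2 * C * f n` neighbours in
`A`. -/
theorem monotone_speed_edges_degeneracy (f : ℝ → ℝ)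
    (hf0 : ∀ x : ℝ, 0 ≤ x → 0 ≤ f x)
    (hfmono : ∀ x y : ℝ, 0 ≤ x → x ≤ y → f x ≤ f y)
    (C : ℝ) (hC : 1 ≤ C) (𝒳 : GraphClass) (hmono : MonotoneGraphClass 𝒳)
    (hspeed : ∀ n : ℕ, ((𝒳 n).ncard : ℝ) ≤ (2 : ℝ) ^ (C * n * f n)) :
    ∀ n : ℕ, ∀ G ∈ 𝒳 n,
      ((G.edgeSet.ncard : ℝ) ≤ C * n * f n) ∧
      ∀ A : Finset (Fin n), A.Nonempty →
        ∃ v ∈ A, (((A : Set (Fin n)) ∩ G.neighborSet v).ncard : ℝ) ≤ 2 * C * f n :=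
  monotone_speed_edges_degeneracy_general f hfmono C hC 𝒳 hmono hspeed
end
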